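/- arXiv:2207.01215 — 2 statements merged into one kernel-verified Lean document; each statement's English description precedes it below -/
import Mathlib

section
/- Let A ≤ S_m and B ≤ S_n. Then δ_1(A≀_I B) = δ_1(A) · 𝒫'_B(δ(A)), where 𝒫'_B(x) = ∑_{ℓ=1}^{n} ℓ δ_ℓ(B) x^{ℓ−1} is the derivative of the polynomial 𝒫_B(x) = ∑_{ℓ=0}^{n} δ_ℓ(B) x^ℓ. -/
open Equiv Finset

/-- The number of fixed points of a permutation. -/
noncomputable def fixCnt {X : Type*} (g : Equiv.Perm X) : ℕ := {x | g x = x}.ncard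

/-- The proportion of elements `a` of the set `C` such that the permutation `f a`
has exactly `k` fixed points. -/
noncomputable def propFixVia {α X : Type*} (f : α → Equiv.Perm X) (C : Set α) (k : ℕ) : ℝ :=
  (({a ∈ C | fixCnt (f a) = k}).ncard : ℝ) / (C.ncard : ℝ)

/-- `δ_k(C)`: the proportion of elements of `C ⊆ Sym(X)` with exactly `k` fixed points. -/
noncomputable def propFix {X : Type*} (C : Set (Equiv.Perm X)) (k : ℕ) : ℝ :=
  propFixVia id C k

/-- The element `(α, b)` of the wreath product acting on `X × Y` via the imprimitive
action `(x, y) ↦ (x α(y), y b)`. -/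
def imprimPerm {X Y : Type*} (α : Y → Equiv.Perm X) (b : Equiv.Perm Y) :
    Equiv.Perm (X × Y) where
  toFun p := (α p.2 p.1, b p.2)
  invFun p := ((α (b⁻¹ p.2))⁻¹ p.1, b⁻¹ p.2)
  left_inv p := by simp
  right_inv p := by simp

/-- The element `(α, b)` of the wreath product acting on `X^Y` via the power action
`(ω(α,b))(y) = ω(y b⁻¹) α(y b⁻¹)`. -/
def powerPerm {X Y : Type*} (α : Y → Equiv.Perm X) (b : Equiv.Perm Y) :
    Equiv.Perm (Y → X) where
  toFun ω y := α (b⁻¹ y) (ω (b⁻¹ y))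
  invFun ω y := (α y)⁻¹ (ω (b y))
  left_inv ω := by funext y; simp
  right_inv ω := by funext y; simp

/-- The number of cycles of a permutation in its disjoint cycle decomposition,
where fixed points are counted as 1-cycles. -/
noncomputable def cycleCnt {Y : Type*} [Fintype Y] [DecidableEq Y] (b : Equiv.Perm Y) : ℕ :=
  b.cycleType.card + fixCnt b

/-- The underlying set of the wreath product `A ≀ B` (pairs `(α, b)`). -/
def wreathSet {m n : ℕ} (A : Subgroup (Equiv.Perm (Fin m))) (B : Subgroup (Equiv.Perm (Fin n))) :
    Set ((Fin n → Equiv.Perm (Fin m)) × Equiv.Perm (Fin n)) :=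
  {p | (∀ y, p.1 y ∈ A) ∧ p.2 ∈ B}

/-- `δ_k(A ≀_I B)` for the imprimitive action on `[m] × [n]`. -/
noncomputable def deltaI {m n : ℕ} (A : Subgroup (Equiv.Perm (Fin m)))
    (B : Subgroup (Equiv.Perm (Fin n))) (k : ℕ) : ℝ :=
  propFixVia (fun p => imprimPerm p.1 p.2) (wreathSet A B) k

/-- `δ_k(A ≀_P B)` for the power action on `[m]^[n]`. -/
noncomputable def deltaP {m n : ℕ} (A : Subgroup (Equiv.Perm (Fin m)))
    (B : Subgroup (Equiv.Perm (Fin n))) (k : ℕ) : ℝ :=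
  propFixVia (fun p => powerPerm p.1 p.2) (wreathSet A B) k

/-- `[B, ℓ]`: the number of elements of `B` with exactly `ℓ` cycles. -/
noncomputable def stirCnt {n : ℕ} (B : Subgroup (Equiv.Perm (Fin n))) (ℓ : ℕ) : ℕ :=
  {b ∈ (B : Set (Equiv.Perm (Fin n))) | cycleCnt b = ℓ}.ncard

/-- A subgroup `A ≤ Sym(X)` is primitive if it is transitive and every block is trivial
(equivalently, it preserves no nontrivial partition of `X`). -/
def IsPrimitiveSubgroup {X : Type*} (A : Subgroup (Equiv.Perm X)) : Prop :=
  MulAction.IsPretransitive A X ∧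
  ∀ s : Set X, MulAction.IsBlock A s → s.Subsingleton ∨ s = Set.univ


/-!
Let `𝒫_C(x) = ∑ₖ δₖ(C) xᵏ`. A point `(x, y)` is fixed by `(α, b)` iff `b` fixes `y` and `α(y)`
fixes `x`, so the number of fixed points of `(α, b)` is the sum of those of the independent uniform
elements `α(y) ∈ A` over the fixed points `y` of `b`. Averaging `x ^ fixCnt` over `A ≀ B` therefore
gives `𝒫_{A ≀_I B} = 𝒫_B ∘ 𝒫_A`. Now `δ₁` is the linear coefficient, and the chain rule gives
`δ₁(A ≀_I B) = 𝒫_B'(𝒫_A(0)) · 𝒫_A'(0) = 𝒫_B'(δ₀(A)) · δ₁(A)`.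
-/

open Polynomial

namespace Polynomial

variable {R : Type*} [CommSemiring R]

lemma coeff_one_comp (p q : R[X]) :
    (p.comp q).coeff 1 = p.derivative.eval (q.coeff 0) * q.coeff 1 := by
  have h (r : R[X]) : r.coeff 1 = r.derivative.eval 0 := by
    simp [← coeff_zero_eq_eval_zero, coeff_derivative]
  rw [h, h q, derivative_comp, eval_mul, eval_comp, coeff_zero_eq_eval_zero, mul_comm]

lemma derivative_eval_eq_sum_Icc {p : R[X]} {n : ℕ} (hp : p.natDegree ≤ n) (x : R) :
    p.derivative.eval x = ∑ ℓ ∈ Icc 1 n, (ℓ : R) * p.coeff ℓ * x ^ (ℓ - 1) := by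
  rw [derivative_eval, sum_over_range' _ (by simp) (n + 1) (Nat.lt_succ_of_le hp), range_eq_Ico,
    sum_eq_sum_Ico_succ_bot (by omega : 0 < n + 1), zero_add, Ico_add_one_right_eq_Icc]
  simp [mul_comm]

end Polynomial

lemma sum_piFinset_pow_sum {ι G R : Type*} [Fintype ι] [DecidableEq ι] [CommSemiring R]
    (s : Finset G) (t : Finset ι) (w : G → ℕ) (x : R) :
    ∑ α ∈ Fintype.piFinset (fun _ : ι => s), x ^ (∑ i ∈ t, w (α i))
      = (∑ g ∈ s, x ^ w g) ^ #t * (#s : R) ^ (Fintype.card ι - #t) := by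
  simp_rw [← prod_pow_eq_pow_sum, ← Fintype.prod_ite_mem t]
  rw [← prod_univ_sum (fun _ => s) fun i g => if i ∈ t then x ^ w g else 1]
  simp only [sum_ite_irrel, sum_const, nsmul_one, prod_ite, prod_const]
  simp [← card_compl, compl_eq_univ_sdiff, filter_not]

section FixedPoints

variable {α β ι : Type*}

lemma fixCnt_eq_card [Fintype α] [DecidableEq α] (g : Perm α) : fixCnt g = #{x | g x = x} := by
  rw [fixCnt, Set.ncard_eq_toFinset_card', Set.toFinset_ofPred]

lemma fixCnt_le_card [Fintype α] (g : Perm α) : fixCnt g ≤ Fintype.card α := by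
  classical
  exact (fixCnt_eq_card g).trans_le (card_filter_le _ _)

lemma fixCnt_imprimPerm [Fintype α] [Fintype β] [DecidableEq β] (a : β → Perm α) (b : Perm β) :
    fixCnt (imprimPerm a b) = ∑ y with b y = y, fixCnt (a y) := by
  classical
  rw [fixCnt_eq_card, card_filter, Fintype.sum_prod_type_right, sum_filter]
  refine sum_congr rfl fun y _ => ?_
  split_ifs with hy
  · rw [fixCnt_eq_card, card_filter]
    simp [imprimPerm, Prod.ext_iff, hy]
  · simp [imprimPerm, Prod.ext_iff, hy]

/-- The paper's `𝒫`, for the permutations `f i` with `i` uniform in `s`. -/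
noncomputable def fixPoly (f : ι → Perm α) (s : Finset ι) : ℝ[X] :=
  C (#s : ℝ)⁻¹ * ∑ i ∈ s, X ^ fixCnt (f i)

lemma coeff_fixPoly (f : ι → Perm α) (s : Finset ι) (k : ℕ) :
    (fixPoly f s).coeff k = propFixVia f ↑s k := by
  have : {i ∈ (s : Set ι) | fixCnt (f i) = k} = ↑{i ∈ s | fixCnt (f i) = k} := by simp
  rw [fixPoly, propFixVia, this, Set.ncard_coe_finset, Set.ncard_coe_finset, coeff_C_mul,
    finsetSum_coeff]
  simp [coeff_X_pow, eq_comm, div_eq_inv_mul]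

lemma natDegree_fixPoly_le [Fintype α] (f : ι → Perm α) (s : Finset ι) :
    (fixPoly f s).natDegree ≤ Fintype.card α :=
  (natDegree_C_mul_le _ _).trans <| natDegree_sum_le_of_forall_le _ _ fun _ _ =>
    (natDegree_X_pow_le _).trans (fixCnt_le_card _)

theorem fixPoly_imprimPerm [Fintype α] [Fintype β] [DecidableEq β] {sA : Finset (Perm α)}
    (hA : sA.Nonempty) (sB : Finset (Perm β)) :
    fixPoly (fun p : (β → Perm α) × Perm β => imprimPerm p.1 p.2)
        (Fintype.piFinset (fun _ => sA) ×ˢ sB)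
      = (fixPoly id sB).comp (fixPoly id sA) := by
  classical
  simp only [fixPoly, card_product, Fintype.card_piFinset, prod_const, card_univ,
    sum_product_right, fixCnt_imprimPerm, sum_piFinset_pow_sum, ← fixCnt_eq_card, mul_comp,
    C_comp, Polynomial.sum_comp, X_pow_comp, id, mul_sum]
  refine sum_congr rfl fun b _ => ?_
  have ha : (#sA : ℝ) ≠ 0 := by exact_mod_cast hA.card_pos.ne'
  have hN : (#sA : ℝ) ^ Fintype.card β = #sA ^ (Fintype.card β - fixCnt b) * #sA ^ fixCnt b := by
    rw [← pow_add, Nat.sub_add_cancel (fixCnt_le_card b)]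
  rw [← mul_sum, mul_pow, ← C_pow, ← map_natCast C, ← C_pow, mul_comm (_ ^ fixCnt b),
    ← mul_assoc, ← mul_assoc, ← map_mul, ← map_mul]
  congr 2
  push_cast
  rw [hN, inv_pow]
  field_simp

end FixedPoints

/-- **Corollary (`δ_1` of the imprimitive wreath product).**
For `A ≤ S_m` and `B ≤ S_n`,
`δ_1(A ≀_I B) = δ_1(A) ⋅ 𝒫'_B(δ(A))` where
`𝒫'_B(x) = ∑_{ℓ=1}^n ℓ δ_ℓ(B) x^{ℓ-1}`. -/
theorem delta_one_imprimitive_wreath (m n : ℕ)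
    (A : Subgroup (Equiv.Perm (Fin m))) (B : Subgroup (Equiv.Perm (Fin n))) :
    deltaI A B 1 =
      propFix (A : Set (Equiv.Perm (Fin m))) 1 *
        ∑ ℓ ∈ Finset.Icc 1 n, (ℓ : ℝ) * propFix (B : Set (Equiv.Perm (Fin n))) ℓ *
          (propFix (A : Set (Equiv.Perm (Fin m))) 0) ^ (ℓ - 1) := by
  classical
  set sA : Finset (Perm (Fin m)) := {g | g ∈ A}
  set sB : Finset (Perm (Fin n)) := {b | b ∈ B}
  have hA : (A : Set (Perm (Fin m))) = sA := by ext; simp [sA]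
  have hB : (B : Set (Perm (Fin n))) = sB := by ext; simp [sB]
  have hW : wreathSet A B = ↑(Fintype.piFinset (fun _ : Fin n => sA) ×ˢ sB) := by
    ext; simp [wreathSet, sA, sB]
  have hsA : sA.Nonempty := ⟨1, by simp [sA, A.one_mem]⟩
  have hdeg : (fixPoly id sB).natDegree ≤ n :=
    (natDegree_fixPoly_le id sB).trans_eq (Fintype.card_fin n)
  rw [deltaI, hW, hA, hB, ← coeff_fixPoly, fixPoly_imprimPerm hsA, coeff_one_comp,
    derivative_eval_eq_sum_Icc hdeg, mul_comm]
  simp only [propFix, coeff_fixPoly]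
end

section
/- Let A ≤ S_m and let C_n = ⟨(1,2,…,n)⟩ ≤ S_n be the cyclic group generated by an n-cycle. Then δ(A≀_P C_n) = 1 − (1/n) ∑_{d | n} φ(d) · (1−δ(A))^{n/d}, where φ denotes Euler's totient function. -/
/-!
An element `(α, ρ^j)` of `A ≀_P C_n` has a fixed point `ω` iff `ω (y ρ^j) = ω y · α y` for all `y`.
The permutation `ρ^j` splits `[n]` into `gcd(n, j)` cycles of length `ℓ = n / gcd(n, j)`, and along
each cycle such an `ω` exists iff the product of the `α`-values around that cycle has a fixed
point. Since `(a₁, …, a_ℓ) ↦ (a_ℓ ⋯ a₁, a₁, …, a_{ℓ-1})` is a bijection of `A^ℓ`, the proportion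
of `α ∈ A^n` for which `(α, ρ^j)` is not a derangement is `(1 - δ(A))^gcd(n, j)`. Averaging over
`j < n` and grouping the `j` by `gcd(n, j) = n / d`, of which there are `φ(d)`, gives the formula.
-/

open Equiv Finset

theorem sum_pow_gcd_eq_sum_totient_mul_pow {R : Type*} [CommSemiring R] (n : ℕ) (t : R) :
    ∑ j ∈ range n, t ^ n.gcd j = ∑ d ∈ n.divisors, (d.totient : R) * t ^ (n / d) := by
  rcases eq_or_ne n 0 with rfl | hn
  · simp
  rw [← sum_fiberwise_of_maps_to (g := (n.gcd ·)) (t := n.divisors)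
      (fun j _ => Nat.mem_divisors.mpr ⟨Nat.gcd_dvd_left n j, hn⟩),
    ← Nat.sum_div_divisors]
  refine sum_congr rfl fun e he => ?_
  have hen : e ∣ n := Nat.dvd_of_mem_divisors he
  rw [sum_congr rfl fun j hj => by rw [(mem_filter.mp hj).2], sum_const, nsmul_eq_mul,
    ← Nat.totient_div_of_dvd (Nat.div_dvd_of_dvd hen), Nat.div_div_self hen hn]

section CycleProd

variable {G : Type*} [Group G] {ℓ : ℕ}

/-- `(w (ℓ-1) * ⋯ * w 1 * w 0)⁻¹`: the inverse of the composite of `w` once around a cycle.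
Inverting each factor turns it into a plain `Fin.partialProd`. -/
def cycleProd (w : Fin ℓ → G) : G := Fin.partialProd (fun k => (w k)⁻¹) (Fin.last ℓ)

theorem cycleProd_snoc (v : Fin ℓ → G) (a : G) :
    cycleProd (Fin.snoc v a : Fin (ℓ + 1) → G) = cycleProd v * a⁻¹ := by
  simp only [cycleProd]
  rw [← Fin.succ_last, Fin.partialProd_succ, ← Fin.partialProd_init]
  simp [Fin.init_def]

theorem cycleProd_mem {A : Subgroup G} {w : Fin ℓ → G} (hw : ∀ k, w k ∈ A) :
    cycleProd w ∈ A := by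
  induction ℓ with
  | zero => exact A.one_mem
  | succ s ih =>
    rw [← Fin.snoc_init_self w, cycleProd_snoc]
    exact A.mul_mem (ih fun k => hw _) (A.inv_mem (hw _))

theorem card_cycleProd_mem (A : Subgroup G) (Q : G → Prop) (hℓ : ℓ ≠ 0) :
    Nat.card {w : Fin ℓ → G // (∀ k, w k ∈ A) ∧ Q (cycleProd w)} =
      Nat.card {g // g ∈ A ∧ Q g} * Nat.card A ^ (ℓ - 1) := by
  obtain ⟨s, rfl⟩ := Nat.exists_eq_succ_of_ne_zero hℓ
  let e : (Fin (s + 1) → G) ≃ G × (Fin s → G) :=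
    { toFun w := (cycleProd w, Fin.init w)
      invFun p := Fin.snoc p.2 (p.1⁻¹ * cycleProd p.2)
      left_inv w := by
        have h := cycleProd_snoc (Fin.init w) (w (Fin.last s))
        rw [Fin.snoc_init_self] at h
        simp [h]
      right_inv p := by simp [cycleProd_snoc, Fin.init_snoc] }
  have he : ∀ w, ((∀ k, w k ∈ A) ∧ Q (cycleProd w)) ↔
      ((e w).1 ∈ A ∧ Q (e w).1) ∧ ∀ k, (e w).2 k ∈ A := by
    intro w
    rw [← Fin.snoc_init_self w]
    simp only [e, Equiv.coe_fn_mk, Fin.init_snoc, cycleProd_snoc, Fin.forall_fin_succ',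
      Fin.snoc_castSucc, Fin.snoc_last]
    generalize Fin.init w = v, w (Fin.last s) = a
    have hlast : ∀ (hv : ∀ k, v k ∈ A), a ∈ A ↔ cycleProd v * a⁻¹ ∈ A := fun hv => by
      rw [A.mul_mem_cancel_left (cycleProd_mem hv), inv_mem_iff]
    constructor
    · rintro ⟨⟨hv, ha⟩, hQ⟩
      exact ⟨⟨(hlast hv).1 ha, hQ⟩, hv⟩
    · rintro ⟨⟨ha, hQ⟩, hv⟩
      exact ⟨⟨hv, (hlast hv).2 ha⟩, hQ⟩
  rw [Nat.card_congr ((Equiv.subtypeEquiv (q := fun p => (p.1 ∈ A ∧ Q p.1) ∧ ∀ k, p.2 k ∈ A)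
      e he).trans (Equiv.subtypeProdEquivProd (p := fun g => g ∈ A ∧ Q g)
      (q := fun v : Fin s → G => ∀ k, v k ∈ A))),
    Nat.card_prod, Nat.card_congr (Equiv.subtypePiEquivPi), Nat.card_pi]
  simp

end CycleProd

theorem exists_apply_finRotate_eq_iff {X : Type*} {ℓ : ℕ} (hℓ : ℓ ≠ 0) (w : Fin ℓ → Perm X) :
    (∃ ω : Fin ℓ → X, ∀ k, ω (finRotate ℓ k) = w k (ω k)) ↔ ∃ x, cycleProd w x = x := by
  obtain ⟨s, rfl⟩ := Nat.exists_eq_succ_of_ne_zero hℓ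
  set P := Fin.partialProd fun k => (w k)⁻¹
  have hP : ∀ k, P k.succ = P k.castSucc * (w k)⁻¹ := Fin.partialProd_succ _
  have hrot : ∀ k : Fin s, finRotate _ k.castSucc = k.succ := fun k => by
    rw [finRotate_apply, Fin.coeSucc_eq_succ]
  constructor
  · rintro ⟨ω, hω⟩
    have hstep : ∀ k, P k.succ (ω (finRotate _ k)) = P k.castSucc (ω k) := fun k => by
      rw [hP, hω, Perm.mul_apply, Perm.coe_inv, symm_apply_apply]
    have hback : ∀ k, P k.castSucc (ω k) = ω 0 := by
      refine Fin.induction (by simp [P]) fun k ih => ?_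
      rw [← Fin.succ_castSucc, ← hrot, hstep, ih]
    have hlast := hstep (Fin.last s)
    rw [finRotate_last, Fin.succ_last, hback] at hlast
    exact ⟨ω 0, hlast⟩
  · rintro ⟨x, hx⟩
    refine ⟨fun k => (P k.castSucc)⁻¹ x, fun k => ?_⟩
    have hstep : w k ((P k.castSucc)⁻¹ x) = (P k.succ)⁻¹ x := by
      rw [hP, mul_inv_rev, inv_inv, Perm.mul_apply]
    rw [hstep]
    rcases Fin.eq_castSucc_or_eq_last k with ⟨k, rfl⟩ | rfl
    · rw [hrot, Fin.succ_castSucc]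
    · rw [finRotate_last, Fin.succ_last]
      nth_rewrite 2 [← hx]
      simp [P, cycleProd]

theorem powerPerm_eq_self_iff {X Y : Type*} (α : Y → Perm X) (b : Perm Y) (ω : Y → X) :
    powerPerm α b ω = ω ↔ ∀ y, ω (b y) = α y (ω y) := by
  rw [funext_iff, ← b.forall_congr_right]
  simp [powerPerm, eq_comm]

theorem exists_powerPerm_eq_self_iff {X Y R : Type*} {ℓ : ℕ} (hℓ : ℓ ≠ 0) {b : Perm Y}
    {e : R × Fin ℓ ≃ Y} (he : ∀ r k, b (e (r, k)) = e (r, finRotate ℓ k)) (α : Y → Perm X) :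
    (∃ ω, powerPerm α b ω = ω) ↔ ∀ r, ∃ x, cycleProd (fun k => α (e (r, k))) x = x := by
  simp_rw [powerPerm_eq_self_iff, ← exists_apply_finRotate_eq_iff hℓ, Classical.skolem]
  constructor
  · rintro ⟨ω, hω⟩
    exact ⟨fun r k => ω (e (r, k)), fun r k => by simp only [← he, hω]⟩
  · rintro ⟨f, hf⟩
    refine ⟨fun y => f (e.symm y).1 (e.symm y).2, fun y => ?_⟩
    obtain ⟨⟨r, k⟩, rfl⟩ := e.surjective y
    simpa only [he, Equiv.symm_apply_apply] using hf r k

theorem card_exists_powerPerm_eq_self {X Y R : Type*} [Fintype R] {ℓ : ℕ} (hℓ : ℓ ≠ 0)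
    {b : Perm Y} {e : R × Fin ℓ ≃ Y} (he : ∀ r k, b (e (r, k)) = e (r, finRotate ℓ k))
    (A : Subgroup (Perm X)) :
    Nat.card {α : Y → Perm X // (∀ y, α y ∈ A) ∧ ∃ ω, powerPerm α b ω = ω} =
      Nat.card {g // g ∈ A ∧ ∃ x, g x = x} ^ Fintype.card R *
        Nat.card A ^ (Fintype.card R * (ℓ - 1)) := by
  let E : (Y → Perm X) ≃ (R → Fin ℓ → Perm X) :=
    (e.arrowCongr (Equiv.refl _)).symm.trans (Equiv.curry _ _ _)
  have hE : ∀ α, ((∀ y, α y ∈ A) ∧ ∃ ω, powerPerm α b ω = ω) ↔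
      ∀ r, (∀ k, E α r k ∈ A) ∧ ∃ x, cycleProd (E α r) x = x := fun α => by
    rw [exists_powerPerm_eq_self_iff hℓ he, ← e.forall_congr_right, Prod.forall, ← forall_and]
    rfl
  let P : (Fin ℓ → Perm X) → Prop := fun w => (∀ k, w k ∈ A) ∧ ∃ x, cycleProd w x = x
  rw [Nat.card_congr ((Equiv.subtypeEquiv (q := fun F => ∀ r, P (F r)) E hE).trans
    (Equiv.subtypePiEquivPi (p := fun _ => P))), Nat.card_pi]
  have hP : Nat.card {w // P w} = Nat.card {g // g ∈ A ∧ ∃ x, g x = x} * Nat.card A ^ (ℓ - 1) :=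
    card_cycleProd_mem A (fun g => ∃ x, g x = x) hℓ
  rw [prod_const, card_univ, hP, mul_pow, ← pow_mul, mul_comm (ℓ - 1)]

theorem Nat.eq_and_eq_of_add_mul_modEq {n j r r' k k' : ℕ} (hn : 0 < n)
    (hr : r < n.gcd j) (hr' : r' < n.gcd j) (hk : k < n / n.gcd j) (hk' : k' < n / n.gcd j)
    (h : r + k * j ≡ r' + k' * j [MOD n]) : r = r' ∧ k = k' := by
  have hmod : ∀ r k, (r + k * j) % n.gcd j = r % n.gcd j := fun r k => by
    rw [Nat.add_mod, Nat.mod_eq_zero_of_dvd (dvd_mul_of_dvd_right (Nat.gcd_dvd_right n j) k),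
      add_zero, Nat.mod_mod]
  have hrr' : r = r' := by
    have h' := h.of_dvd (Nat.gcd_dvd_left n j)
    rwa [Nat.ModEq, hmod, hmod, Nat.mod_eq_of_lt hr, Nat.mod_eq_of_lt hr'] at h'
  subst hrr'
  have hkk' := (Nat.ModEq.add_left_cancel' r h).cancel_right_div_gcd hn
  exact ⟨rfl, by rwa [Nat.ModEq, Nat.mod_eq_of_lt hk, Nat.mod_eq_of_lt hk'] at hkk'⟩

theorem orderOf_finRotate {n : ℕ} (hn : n ≠ 0) : orderOf (finRotate n) = n := by
  obtain rfl | hn1 := eq_or_ne n 1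
  · rw [orderOf_eq_one_iff]
    exact Subsingleton.elim _ _
  rw [(isCycle_finRotate_of_le (by omega)).orderOf, support_finRotate_of_le (by omega), card_univ,
    Fintype.card_fin]

theorem val_finRotate_pow_apply {n : ℕ} (j : ℕ) (y : Fin n) :
    ((finRotate n ^ j) y : ℕ) = (y + j) % n := by
  induction j with
  | zero => simp [Nat.mod_eq_of_lt y.isLt]
  | succ j ih =>
    have := y.neZero
    rw [pow_succ', Perm.mul_apply, finRotate_apply, Fin.val_add, ih, Fin.val_one', ← Nat.add_mod,
      add_assoc]

/-- The cycles of `finRotate n ^ j`: the point `r + k j mod n` is the `k`-th point of the `r`-th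
cycle, for `r < gcd n j` and `k < n / gcd n j`. -/
noncomputable def finRotatePowCycleEquiv {n : ℕ} (hn : n ≠ 0) (j : ℕ) :
    Fin (n.gcd j) × Fin (n / n.gcd j) ≃ Fin n :=
  Equiv.ofBijective (fun p => ⟨(p.1 + p.2 * j) % n, Nat.mod_lt _ (Nat.pos_of_ne_zero hn)⟩) <| by
    refine (Fintype.bijective_iff_injective_and_card _).mpr ⟨?_, ?_⟩
    · rintro ⟨r, k⟩ ⟨r', k'⟩ h
      obtain ⟨hr, hk⟩ := Nat.eq_and_eq_of_add_mul_modEq (Nat.pos_of_ne_zero hn) r.isLt r'.isLt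
        k.isLt k'.isLt (Fin.val_eq_of_eq h)
      exact Prod.ext (Fin.ext hr) (Fin.ext hk)
    · simp [Nat.mul_div_cancel' (Nat.gcd_dvd_left n j)]

theorem finRotate_pow_finRotatePowCycleEquiv {n : ℕ} (hn : n ≠ 0) (j : ℕ) (r : Fin (n.gcd j))
    (k : Fin (n / n.gcd j)) :
    (finRotate n ^ j) (finRotatePowCycleEquiv hn j (r, k)) =
      finRotatePowCycleEquiv hn j (r, finRotate _ k) := by
  have := k.neZero
  have hn_dvd : n ∣ n / n.gcd j * j := by
    rw [Nat.div_mul_right_comm (Nat.gcd_dvd_left n j), Nat.mul_div_assoc _ (Nat.gcd_dvd_right n j)]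
    exact dvd_mul_right n _
  have hk : (k + 1 % (n / n.gcd j)) % (n / n.gcd j) * j ≡ (k + 1) * j [MOD n] :=
    (((Nat.mod_modEq _ _).trans ((Nat.mod_modEq 1 _).add_left k)).mul_right' j).of_dvd hn_dvd
  ext
  simp only [finRotatePowCycleEquiv, Equiv.ofBijective_apply, val_finRotate_pow_apply,
    finRotate_apply, Fin.val_add, Fin.val_one']
  rw [Nat.mod_add_mod, add_assoc, ← add_one_mul]
  exact (hk.add_left r).symm

theorem card_exists_powerPerm_finRotate_pow_eq_self {X : Type*} {n : ℕ} (hn : n ≠ 0) (j : ℕ)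
    (A : Subgroup (Perm X)) :
    Nat.card {α : Fin n → Perm X // (∀ y, α y ∈ A) ∧ ∃ ω, powerPerm α (finRotate n ^ j) ω = ω} =
      Nat.card {g // g ∈ A ∧ ∃ x, g x = x} ^ n.gcd j * Nat.card A ^ (n - n.gcd j) := by
  have hgn : n.gcd j ∣ n := Nat.gcd_dvd_left n j
  have hℓ : n / n.gcd j ≠ 0 :=
    (Nat.div_pos (Nat.le_of_dvd (Nat.pos_of_ne_zero hn) hgn) (Nat.gcd_pos_of_pos_left j
      (Nat.pos_of_ne_zero hn))).ne'
  rw [card_exists_powerPerm_eq_self hℓ (finRotate_pow_finRotatePowCycleEquiv hn j),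
    Fintype.card_fin, Nat.mul_sub_one, Nat.mul_div_cancel' hgn]

theorem fixCnt_eq_zero_iff {X : Type*} [Finite X] (g : Perm X) :
    fixCnt g = 0 ↔ ∀ x, g x ≠ x := by
  simp [fixCnt, Set.ncard_eq_zero (Set.toFinite _), Set.eq_empty_iff_forall_notMem]

theorem propFixVia_zero {α X : Type*} [Finite X] (f : α → Perm X) {C : Set α}
    (hC : C.ncard ≠ 0) :
    propFixVia f C 0 = 1 - ({a ∈ C | ∃ x, f a x = x}.ncard : ℝ) / C.ncard := by
  have hsplit : {a ∈ C | fixCnt (f a) = 0} = C \ {a ∈ C | ∃ x, f a x = x} := by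
    ext a
    simp [fixCnt_eq_zero_iff]
  have hcard := Set.ncard_sdiff_add_ncard_of_subset (Set.sep_subset C fun a => ∃ x, f a x = x)
    (Set.finite_of_ncard_ne_zero hC)
  rw [propFixVia, hsplit, eq_sub_iff_add_eq, ← add_div, ← Nat.cast_add, hcard,
    div_self (Nat.cast_ne_zero.mpr hC)]

theorem one_sub_propFix_zero {X : Type*} [Finite X] (A : Subgroup (Perm X)) :
    1 - propFix (A : Set (Perm X)) 0 =
      (Nat.card {g // g ∈ A ∧ ∃ x, g x = x} : ℝ) / Nat.card A := by
  have hA : (A : Set (Perm X)).ncard ≠ 0 := by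
    rw [← Nat.card_coe_set_eq]
    exact Nat.card_pos.ne'
  rw [propFix, propFixVia_zero id hA, sub_sub_cancel, ← Nat.card_coe_set_eq,
    ← Nat.card_coe_set_eq]
  rfl

section Wreath

variable {m n : ℕ} (A : Subgroup (Perm (Fin m))) (B : Subgroup (Perm (Fin n)))

theorem ncard_wreathSet : (wreathSet A B).ncard = Nat.card A ^ n * Nat.card B := by
  rw [← Nat.card_coe_set_eq]
  change Nat.card {p : (Fin n → Perm (Fin m)) × Perm (Fin n) // (∀ y, p.1 y ∈ A) ∧ p.2 ∈ B} = _
  rw [Nat.card_congr (Equiv.subtypeProdEquivProd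
    (p := fun α : Fin n → Perm (Fin m) => ∀ y, α y ∈ A) (q := (· ∈ B))), Nat.card_prod,
    Nat.card_congr Equiv.subtypePiEquivPi, Nat.card_pi]
  simp

theorem deltaP_zero [Fintype B] :
    deltaP A B 0 = 1 - ((∑ b : B, Nat.card {α : Fin n → Perm (Fin m) //
        (∀ y, α y ∈ A) ∧ ∃ ω, powerPerm α b ω = ω} : ℕ) : ℝ) / (Nat.card A ^ n * Nat.card B) := by
  have hsigma : {p ∈ wreathSet A B | ∃ ω, powerPerm p.1 p.2 ω = ω}.ncard =
      ∑ b : B, Nat.card {α : Fin n → Perm (Fin m) //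
        (∀ y, α y ∈ A) ∧ ∃ ω, powerPerm α b ω = ω} := by
    rw [← Nat.card_coe_set_eq, ← Nat.card_sigma]
    exact Nat.card_congr
      { toFun p := ⟨⟨p.1.2, p.2.1.2⟩, ⟨p.1.1, p.2.1.1, p.2.2⟩⟩
        invFun q := ⟨(q.2.1, q.1.1), ⟨q.2.2.1, q.1.2⟩, q.2.2.2⟩ }
  rw [deltaP, propFixVia_zero _ (by simp [ncard_wreathSet, Nat.card_pos.ne']), hsigma,
    ncard_wreathSet, Nat.cast_mul, Nat.cast_pow]

end Wreath

theorem sum_card_exists_powerPerm_zpowers_finRotate {X : Type*} {n : ℕ} (hn : n ≠ 0)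
    (A : Subgroup (Perm X)) [Fintype (Subgroup.zpowers (finRotate n))] :
    ∑ b : Subgroup.zpowers (finRotate n),
        Nat.card {α : Fin n → Perm X // (∀ y, α y ∈ A) ∧ ∃ ω, powerPerm α b ω = ω} =
      ∑ j ∈ range n,
        Nat.card {g // g ∈ A ∧ ∃ x, g x = x} ^ n.gcd j * Nat.card A ^ (n - n.gcd j) := by
  rw [← Fin.sum_univ_eq_sum_range, ← ((finCongr (orderOf_finRotate hn).symm).trans
    (finEquivZPowers (isOfFinOrder_of_finite _))).sum_comp]
  exact sum_congr rfl fun j _ => card_exists_powerPerm_finRotate_pow_eq_self hn j A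

/-- **Corollary (power action over a cyclic group generated by an `n`-cycle).**
For `A ≤ S_m` and `C_n = ⟨(1,2,…,n)⟩ ≤ S_n`,
`δ(A ≀_P C_n) = 1 - (1/n) ∑_{d ∣ n} φ(d) (1 - δ(A))^{n/d}`. -/
theorem delta_power_wreath_cyclic (m n : ℕ) (hn : 1 ≤ n)
    (A : Subgroup (Equiv.Perm (Fin m))) :
    deltaP A (Subgroup.zpowers (finRotate n)) 0 =
      1 - (1 / (n : ℝ)) *
        ∑ d ∈ Nat.divisors n,
          (Nat.totient d : ℝ) *
            (1 - propFix (A : Set (Equiv.Perm (Fin m))) 0) ^ (n / d) := by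
  have hn0 : n ≠ 0 := by omega
  let := Fintype.ofFinite (Subgroup.zpowers (finRotate n))
  have ha : (Nat.card A : ℝ) ≠ 0 := Nat.cast_ne_zero.mpr Nat.card_pos.ne'
  rw [deltaP_zero, Nat.card_zpowers, orderOf_finRotate hn0,
    sum_card_exists_powerPerm_zpowers_finRotate hn0, one_sub_propFix_zero,
    ← sum_pow_gcd_eq_sum_totient_mul_pow, mul_sum, Nat.cast_sum, sum_div]
  congr 1
  refine sum_congr rfl fun j _ => ?_
  have hpow : (Nat.card A : ℝ) ^ n = Nat.card A ^ n.gcd j * Nat.card A ^ (n - n.gcd j) := by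
    rw [← pow_add, Nat.add_sub_cancel' (Nat.gcd_le_left j (Nat.pos_of_ne_zero hn0))]
  push_cast
  rw [hpow, div_pow]
  field_simp
end
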